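/- Let H_S and A be n×n complex Hermitian matrices and let v be a unit vector in ℂ^n with H_S v = s0·v and A v = a0·v for real numbers s0, a0. Let δ be a real number, let e0, e1 be the standard basis of ℂ², let H_P = δ·|e1⟩⟨e1| (the 2×2 matrix with δ in the (1,1) entry, indexing from 0, and zeros elsewhere), and set H2 = H_S ⊗ I_2 + I_n ⊗ H_P + A ⊗ |e1⟩⟨e1| acting on ℂ^(2n). Then for every real t, exp(−i t H2) applied to (1/√2)·v ⊗ (e0 + e1) equals e^(−i t s0) · (1/√2) · v ⊗ (e0 + e^(−i ω t) e1), where ω = a0 + δ. -/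

import Mathlib

open Matrix Kronecker

/-- The Kronecker (tensor) product of two vectors. -/
def vecKron {K L : Type*} (v : K → ℂ) (w : L → ℂ) : K × L → ℂ :=
  fun p => v p.1 * w p.2

/-- The first standard basis vector of `ℂ²`. -/
def e0 : Fin 2 → ℂ := ![1, 0]

/-- The second standard basis vector of `ℂ²`. -/
def e1 : Fin 2 → ℂ := ![0, 1]

/-- The rank-one projection `|e1⟩⟨e1|` onto the second standard basis vector of `ℂ²`. -/
def projE1 : Matrix (Fin 2) (Fin 2) ℂ := !![0, 0; 0, 1]


/-!
Both `v ⊗ e0` and `v ⊗ e1` are eigenvectors of `H2`, with eigenvalues `s0` and `s0 + a0 + δ`,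
since `e0` and `e1` are eigenvectors of `|e1⟩⟨e1|` with eigenvalues `0` and `1`. On an eigenvector
the exponential series collapses to the scalar exponential of the eigenvalue, so each component
only picks up a phase, and their ratio is `e^{-iωt}`.
-/

namespace Matrix

variable {𝕂 N : Type*} [RCLike 𝕂] [Fintype N] [DecidableEq N]

theorem pow_mulVec_of_mulVec_eq_smul {M : Matrix N N 𝕂} {w : N → 𝕂} {c : 𝕂}
    (h : M *ᵥ w = c • w) (k : ℕ) : (M ^ k) *ᵥ w = c ^ k • w := by
  induction k with
  | zero => simp
  | succ k ih => rw [pow_succ, ← mulVec_mulVec, h, mulVec_smul, ih, smul_smul, pow_succ']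

-- `NormedSpace.exp` does not depend on the norm; the operator norm only unlocks the series lemmas.
open scoped Norms.Operator in
theorem exp_mulVec_of_mulVec_eq_smul {M : Matrix N N 𝕂} {w : N → 𝕂} {c : 𝕂}
    (h : M *ᵥ w = c • w) : NormedSpace.exp M *ᵥ w = NormedSpace.exp c • w := by
  let applyTo : Matrix N N 𝕂 →+ (N → 𝕂) :=
    { toFun := (· *ᵥ w), map_zero' := zero_mulVec w, map_add' := fun A B => add_mulVec A B w }
  have hM := (NormedSpace.exp_series_hasSum_exp' (𝕂 := 𝕂) M).map applyTo
    (continuous_id.matrix_mulVec continuous_const)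
  have hc := (NormedSpace.exp_series_hasSum_exp' (𝕂 := 𝕂) c).smul_const w
  refine hM.unique (hc.congr_fun fun k => ?_)
  simp [applyTo, smul_mulVec, pow_mulVec_of_mulVec_eq_smul h, smul_smul]

end Matrix

section vecKron

variable {K L : Type*}

theorem vecKron_add_right (x : K → ℂ) (y z : L → ℂ) :
    vecKron x (y + z) = vecKron x y + vecKron x z := by
  funext p
  simp [vecKron, mul_add]

theorem vecKron_smul_right (x : K → ℂ) (c : ℂ) (y : L → ℂ) :
    vecKron x (c • y) = c • vecKron x y := by
  funext p
  simp only [vecKron, Pi.smul_apply, smul_eq_mul]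
  ring

theorem vecKron_smul_left (c : ℂ) (x : K → ℂ) (y : L → ℂ) :
    vecKron (c • x) y = c • vecKron x y := by
  funext p
  simp only [vecKron, Pi.smul_apply, smul_eq_mul]
  ring

variable [Fintype K] [Fintype L]

theorem kronecker_mulVec_vecKron (A : Matrix K K ℂ) (B : Matrix L L ℂ) (x : K → ℂ) (y : L → ℂ) :
    (A ⊗ₖ B) *ᵥ vecKron x y = vecKron (A *ᵥ x) (B *ᵥ y) := by
  funext p
  simp only [mulVec, dotProduct, vecKron, kroneckerMap_apply, Fintype.sum_prod_type,
    Finset.sum_mul_sum]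
  exact Finset.sum_congr rfl fun k _ => Finset.sum_congr rfl fun l _ => by ring

theorem kronecker_coupling_mulVec_vecKron [DecidableEq K] [DecidableEq L]
    {HS A : Matrix K K ℂ} {P : Matrix L L ℂ} {v : K → ℂ} {p : L → ℂ} {s a π : ℂ} (δ : ℂ)
    (hvS : HS *ᵥ v = s • v) (hvA : A *ᵥ v = a • v) (hp : P *ᵥ p = π • p) :
    (HS ⊗ₖ (1 : Matrix L L ℂ) + (1 : Matrix K K ℂ) ⊗ₖ (δ • P) + A ⊗ₖ P) *ᵥ vecKron v p =
      (s + (a + δ) * π) • vecKron v p := by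
  simp only [add_mulVec, kronecker_mulVec_vecKron, hvS, hvA, hp, one_mulVec, smul_mulVec,
    vecKron_smul_left, vecKron_smul_right, smul_smul]
  module

end vecKron

theorem projE1_mulVec_e0 : projE1 *ᵥ e0 = (0 : ℂ) • e0 := by
  funext i
  fin_cases i <;> simp [projE1, e0, mulVec, dotProduct, Fin.sum_univ_two]

theorem projE1_mulVec_e1 : projE1 *ᵥ e1 = (1 : ℂ) • e1 := by
  funext i
  fin_cases i <;> simp [projE1, e1, mulVec, dotProduct, Fin.sum_univ_two]

theorem probe_free_evolution_general {n : ℕ}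
    (HS A : Matrix (Fin n) (Fin n) ℂ) (v : Fin n → ℂ) (s0 a0 δ : ℝ)
    (hvS : HS.mulVec v = (s0 : ℂ) • v)
    (hvA : A.mulVec v = (a0 : ℂ) • v)
    (t : ℝ) :
    (NormedSpace.exp ((-(Complex.I) * (t : ℂ)) •
        (HS ⊗ₖ (1 : Matrix (Fin 2) (Fin 2) ℂ)
          + (1 : Matrix (Fin n) (Fin n) ℂ) ⊗ₖ ((δ : ℂ) • projE1)
          + A ⊗ₖ projE1))).mulVec
        (((Real.sqrt 2 : ℂ))⁻¹ • vecKron v (e0 + e1)) =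
      Complex.exp (-(Complex.I) * (t : ℂ) * (s0 : ℂ)) •
        (((Real.sqrt 2 : ℂ))⁻¹ •
          vecKron v (e0 + Complex.exp (-(Complex.I) * ((a0 + δ : ℝ) : ℂ) * (t : ℂ)) • e1)) := by
  have evolve : ∀ {p : Fin 2 → ℂ} {π : ℂ}, projE1 *ᵥ p = π • p →
      NormedSpace.exp ((-(Complex.I) * t) • (HS ⊗ₖ (1 : Matrix (Fin 2) (Fin 2) ℂ)
          + (1 : Matrix (Fin n) (Fin n) ℂ) ⊗ₖ ((δ : ℂ) • projE1) + A ⊗ₖ projE1)) *ᵥ vecKron v p =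
        Complex.exp (-(Complex.I) * t * (s0 + (a0 + δ) * π)) • vecKron v p := fun hp => by
    rw [Complex.exp_eq_exp_ℂ]
    exact exp_mulVec_of_mulVec_eq_smul <| by
      rw [smul_mulVec, kronecker_coupling_mulVec_vecKron (δ : ℂ) hvS hvA hp, smul_smul]
  rw [vecKron_add_right, mulVec_smul, mulVec_add, evolve projE1_mulVec_e0,
    evolve projE1_mulVec_e1, vecKron_add_right, vecKron_smul_right]
  have hphase : Complex.exp (-(Complex.I) * t * (s0 + (a0 + δ) * 1)) =
      Complex.exp (-(Complex.I) * t * s0) *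
        Complex.exp (-(Complex.I) * ((a0 + δ : ℝ) : ℂ) * t) := by
    rw [← Complex.exp_add]
    congr 1
    push_cast
    ring
  rw [hphase]
  simp only [mul_zero, add_zero, smul_add, smul_smul]
  module

/-- for Hermitian `H_S`, `A` with common unit eigenvector `v`
(`H_S v = s0 v`, `A v = a0 v`), probe Hamiltonian `H_P = δ|e1⟩⟨e1|` and
`H2 = H_S ⊗ I₂ + I_n ⊗ H_P + A ⊗ |e1⟩⟨e1|`, the free evolution of
`(1/√2) v ⊗ (e0 + e1)` under `H2` is `e^{-its0} (1/√2) v ⊗ (e0 + e^{-iωt} e1)`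
with `ω = a0 + δ`. -/
theorem probe_free_evolution {n : ℕ}
    (HS A : Matrix (Fin n) (Fin n) ℂ) (v : Fin n → ℂ) (s0 a0 δ : ℝ)
    (hHS : HS.IsHermitian) (hA : A.IsHermitian)
    (hv : star v ⬝ᵥ v = 1)
    (hvS : HS.mulVec v = (s0 : ℂ) • v)
    (hvA : A.mulVec v = (a0 : ℂ) • v)
    (t : ℝ) :
    (NormedSpace.exp ((-(Complex.I) * (t : ℂ)) •
        (HS ⊗ₖ (1 : Matrix (Fin 2) (Fin 2) ℂ)
          + (1 : Matrix (Fin n) (Fin n) ℂ) ⊗ₖ ((δ : ℂ) • projE1)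
          + A ⊗ₖ projE1))).mulVec
        (((Real.sqrt 2 : ℂ))⁻¹ • vecKron v (e0 + e1)) =
      Complex.exp (-(Complex.I) * (t : ℂ) * (s0 : ℂ)) •
        (((Real.sqrt 2 : ℂ))⁻¹ •
          vecKron v (e0 + Complex.exp (-(Complex.I) * ((a0 + δ : ℝ) : ℂ) * (t : ℂ)) • e1)) :=
  probe_free_evolution_general HS A v s0 a0 δ hvS hvA t
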